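/- arXiv:1504.07368 — 2 statements merged into one kernel-verified Lean document; each statement's English description precedes it below -/
import Mathlib

section
/- Let $c_2, c_2' > 0$ and let $G$ be an $m\times n$ real matrix of full rank with $n \le m$ (so $G^*G$ is positive definite). Then the matrix Riccati terminal value problem $-\dot K(t) = -c_2' K(t)^2 + c_2 G^*G$ on $[0,T]$ with $K(T) = \lambda G^*G$, where $\lambda \ge 0$, has a unique solution $K \in C^1([0,T]; S^n)$ which is symmetric nonnegative definite for every $t\in[0,T]$. -/
open Matrix Set Real

/-!
Diagonalising `A = GᵀG` (positive definite) decouples the equation into the scalar Riccati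
equations `k' = c₂' k² - c₂ x`, one for each eigenvalue `x > 0`; these are solved explicitly with
`cosh` and `sinh`, and the solutions stay nonnegative backwards from a nonnegative terminal value.
Applying the explicit scalar solution to `A` through the functional calculus gives a
nonnegative solution. The right-hand side is polynomial, hence locally Lipschitz, so two solutions
with the same terminal value coincide by the Gronwall uniqueness theorem on the compact set swept
out by both trajectories.
-/

lemma mul_cosh_add_mul_sinh_nonneg {p q x : ℝ} (hp : 0 ≤ p) (hq : 0 ≤ q) (hx : 0 ≤ x) :
    0 ≤ p * cosh x + q * sinh x := by
  have := sinh_nonneg_iff.2 hx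
  positivity

lemma mul_cosh_add_mul_sinh_pos {p q x : ℝ} (hp : 0 < p) (hq : 0 ≤ q) (hx : 0 ≤ x) :
    0 < p * cosh x + q * sinh x := by
  have := sinh_nonneg_iff.2 hx
  positivity

/-- Obtained by linearising `φ' = c (b² - φ²)`, `φ 0 = L` through `φ = u' / (c u)`, where
`u'' = (c b)² u`, `u 0 = b`, `u' 0 = c b L`. -/
noncomputable def riccatiFlow (c b L τ : ℝ) : ℝ :=
  b * (L * cosh (c * b * τ) + b * sinh (c * b * τ)) /
    (b * cosh (c * b * τ) + L * sinh (c * b * τ))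

lemma riccatiFlow_zero {b : ℝ} (hb : b ≠ 0) (c L : ℝ) : riccatiFlow c b L 0 = L := by
  simp [riccatiFlow, hb]

lemma riccatiFlow_nonneg {c b L τ : ℝ} (hc : 0 ≤ c) (hb : 0 ≤ b) (hL : 0 ≤ L) (hτ : 0 ≤ τ) :
    0 ≤ riccatiFlow c b L τ := by
  have hx : 0 ≤ c * b * τ := by positivity
  exact div_nonneg (mul_nonneg hb (mul_cosh_add_mul_sinh_nonneg hL hb hx))
    (mul_cosh_add_mul_sinh_nonneg hb hL hx)

lemma hasDerivAt_riccatiFlow {c b L τ : ℝ} (hc : 0 ≤ c) (hb : 0 < b) (hL : 0 ≤ L) (hτ : 0 ≤ τ) :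
    HasDerivAt (riccatiFlow c b L) (c * (b ^ 2 - riccatiFlow c b L τ ^ 2)) τ := by
  have hch : HasDerivAt (fun s => cosh (c * b * s)) (sinh (c * b * τ) * (c * b)) τ := by
    simpa using ((hasDerivAt_id τ).const_mul (c * b)).cosh
  have hsh : HasDerivAt (fun s => sinh (c * b * s)) (cosh (c * b * τ) * (c * b)) τ := by
    simpa using ((hasDerivAt_id τ).const_mul (c * b)).sinh
  have hnum := ((hch.const_mul L).fun_add (hsh.const_mul b)).const_mul b
  have hden := (hch.const_mul b).fun_add (hsh.const_mul L)
  have hden_pos := mul_cosh_add_mul_sinh_pos hb hL (by positivity : 0 ≤ c * b * τ)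
  refine (hnum.div hden hden_pos.ne').congr_deriv ?_
  unfold riccatiFlow
  set x := c * b * τ
  field_simp
  ring

theorem eqOn_Icc_of_locallyLipschitz_of_eq_right {E : Type*} [NormedAddCommGroup E]
    [NormedSpace ℝ E] {v : E → E} (hv : LocallyLipschitz v) {f g : ℝ → E} {a b : ℝ}
    (hf : ∀ t ∈ Icc a b, HasDerivWithinAt f (v (f t)) (Icc a b) t)
    (hg : ∀ t ∈ Icc a b, HasDerivWithinAt g (v (g t)) (Icc a b) t) (hb : f b = g b) :
    EqOn f g (Icc a b) := by
  have hfc : ContinuousOn f (Icc a b) := fun t ht => (hf t ht).continuousWithinAt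
  have hgc : ContinuousOn g (Icc a b) := fun t ht => (hg t ht).continuousWithinAt
  set s := f '' Icc a b ∪ g '' Icc a b
  obtain ⟨K, hK⟩ := (hv.locallyLipschitzOn (s := s)).exists_lipschitzOnWith_of_compact
    ((isCompact_Icc.image_of_continuousOn hfc).union (isCompact_Icc.image_of_continuousOn hgc))
  have hleft : ∀ t ∈ Ioc a b, Icc a b ∈ nhdsWithin t (Iic t) := fun t ht =>
    Filter.mem_of_superset (Icc_mem_nhdsLE ht.1) (Icc_subset_Icc_right ht.2)
  exact ODE_solution_unique_of_mem_Icc_left (v := fun _ => v) (s := fun _ => s)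
    (fun _ _ => hK) hfc
    (fun t ht => (hf t (Ioc_subset_Icc_self ht)).mono_of_mem_nhdsWithin (hleft t ht))
    (fun t ht => Or.inl (mem_image_of_mem f (Ioc_subset_Icc_self ht))) hgc
    (fun t ht => (hg t (Ioc_subset_Icc_self ht)).mono_of_mem_nhdsWithin (hleft t ht))
    (fun t ht => Or.inr (mem_image_of_mem g (Ioc_subset_Icc_self ht))) hb

section

variable {ι : Type*} [Fintype ι]

theorem eqOn_Icc_of_riccati_of_eq_right (A : Matrix ι ι ℝ) (c c' : ℝ) {a b : ℝ}
    {K₁ K₂ : ℝ → Matrix ι ι ℝ}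
    (h₁ : ∀ t ∈ Icc a b, ∀ i j, HasDerivWithinAt (fun s => K₁ s i j)
      ((c' • (K₁ t * K₁ t) - c • A) i j) (Icc a b) t)
    (h₂ : ∀ t ∈ Icc a b, ∀ i j, HasDerivWithinAt (fun s => K₂ s i j)
      ((c' • (K₂ t * K₂ t) - c • A) i j) (Icc a b) t)
    (hb : K₁ b = K₂ b) : EqOn K₁ K₂ (Icc a b) := by
  -- `Matrix` carries no norm instance, so the ODE is posed in `ι → ι → ℝ`.
  set v : (ι → ι → ℝ) → ι → ι → ℝ := fun x i j => (c' • (of x * of x) - c • A) i j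
  have hv : ContDiff ℝ 1 v := by
    refine contDiff_pi.2 fun i => contDiff_pi.2 fun j => ?_
    simp only [v, Matrix.sub_apply, Matrix.smul_apply, mul_apply, of_apply, smul_eq_mul]
    fun_prop
  have hpi : ∀ K : ℝ → Matrix ι ι ℝ, (∀ t ∈ Icc a b, ∀ i j, HasDerivWithinAt (fun s => K s i j)
      ((c' • (K t * K t) - c • A) i j) (Icc a b) t) →
      ∀ t ∈ Icc a b, HasDerivWithinAt (fun s => (K s : ι → ι → ℝ)) (v (K t)) (Icc a b) t :=
    fun K hK t ht => hasDerivWithinAt_pi.2 fun i => hasDerivWithinAt_pi.2 (hK t ht i)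
  exact eqOn_Icc_of_locallyLipschitz_of_eq_right hv.locallyLipschitz (hpi K₁ h₁) (hpi K₂ h₂) hb

variable [DecidableEq ι]

theorem Matrix.IsHermitian.hasDerivWithinAt_cfc_apply {A : Matrix ι ι ℝ} (hA : A.IsHermitian)
    {f : ℝ → ℝ → ℝ} {f' : ℝ → ℝ} {S : Set ℝ} {t : ℝ}
    (hf : ∀ x ∈ spectrum ℝ A, HasDerivWithinAt (fun s => f s x) (f' x) S t) (i j : ι) :
    HasDerivWithinAt (fun s => cfc (f s) A i j) (cfc f' A i j) S t := by
  set U : Matrix ι ι ℝ := (hA.eigenvectorUnitary : Matrix ι ι ℝ)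
  have entry : ∀ g : ℝ → ℝ, cfc g A i j = ∑ l, U i l * g (hA.eigenvalues l) * star U l j := by
    intro g
    rw [hA.cfc_eq, IsHermitian.cfc, Unitary.conjStarAlgAut_apply, mul_apply]
    simp [U, mul_diagonal]
  simp only [entry]
  exact HasDerivWithinAt.fun_sum fun l _ =>
    ((hf _ (hA.eigenvalues_mem_spectrum_real l)).const_mul _).mul_const _

/-- On the eigenvalue `x` of `A` this is the scalar solution with `c' b² = c x`. -/
noncomputable def riccatiSolution (A : Matrix ι ι ℝ) (c c' L T t : ℝ) : Matrix ι ι ℝ :=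
  cfc (fun x => riccatiFlow c' √(c * x / c') (L * x) (T - t)) A

open scoped MatrixOrder

lemma riccatiSolution_self {A : Matrix ι ι ℝ} (hA : A.PosDef) {c c' : ℝ} (hc : 0 < c)
    (hc' : 0 < c') (L T : ℝ) : riccatiSolution A c c' L T T = L • A := by
  rw [riccatiSolution, ← cfc_const_mul_id L A hA.isHermitian.isSelfAdjoint]
  refine cfc_congr fun x hx => ?_
  have hx : 0 < x := hA.isStrictlyPositive.spectrum_pos hx
  rw [sub_self, riccatiFlow_zero (by positivity)]

lemma posSemidef_riccatiSolution {A : Matrix ι ι ℝ} (hA : A.PosSemidef) (c : ℝ) {c' L T t : ℝ}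
    (hc' : 0 ≤ c') (hL : 0 ≤ L) (ht : t ≤ T) : (riccatiSolution A c c' L T t).PosSemidef := by
  rw [← nonneg_iff_posSemidef]
  refine cfc_nonneg fun x hx => riccatiFlow_nonneg hc' (sqrt_nonneg _) ?_ (sub_nonneg.2 ht)
  have hx : 0 ≤ x := spectrum_nonneg_of_nonneg hA.nonneg hx
  positivity

lemma riccatiSolution_rhs_eq_cfc {A : Matrix ι ι ℝ} (hA : A.IsHermitian) (c c' L T t : ℝ) :
    c' • (riccatiSolution A c c' L T t * riccatiSolution A c c' L T t) - c • A =
      cfc (fun x => c' * riccatiFlow c' √(c * x / c') (L * x) (T - t) ^ 2 - c * x) A := by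
  have hfin := A.finite_real_spectrum
  rw [riccatiSolution, ← sq, ← cfc_const_mul_id c A hA.isSelfAdjoint,
    ← cfc_pow _ _ A (hfin.continuousOn _), ← cfc_const_mul _ _ A (hfin.continuousOn _),
    ← cfc_sub _ _ A (hfin.continuousOn _) (hfin.continuousOn _)]

lemma hasDerivWithinAt_riccatiSolution_apply {A : Matrix ι ι ℝ} (hA : A.PosDef) {c c' L T t : ℝ}
    (hc : 0 < c) (hc' : 0 < c') (hL : 0 ≤ L) (ht : t ≤ T) (S : Set ℝ) (i j : ι) :
    HasDerivWithinAt (fun s => riccatiSolution A c c' L T s i j)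
      ((c' • (riccatiSolution A c c' L T t * riccatiSolution A c c' L T t) - c • A) i j) S t := by
  rw [riccatiSolution_rhs_eq_cfc hA.isHermitian]
  refine hA.isHermitian.hasDerivWithinAt_cfc_apply (fun x hx => ?_) i j
  have hx : 0 < x := hA.isStrictlyPositive.spectrum_pos hx
  have hb : c' * √(c * x / c') ^ 2 = c * x := by
    rw [sq_sqrt (by positivity)]
    field_simp
  refine ((hasDerivAt_riccatiFlow hc'.le (by positivity) (by positivity)
    (sub_nonneg.2 ht)).comp_const_sub T t).hasDerivWithinAt.congr_deriv ?_
  linear_combination -hb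

end

theorem riccati_terminal_value_problem_n_le_m_general
    {m n : ℕ} (G : Matrix (Fin m) (Fin n) ℝ)
    (hG : Function.Injective G.mulVec)
    (c₂ c₂' lam T : ℝ) (hc₂ : 0 < c₂) (hc₂' : 0 < c₂') (hlam : 0 ≤ lam) :
    ∃ K : ℝ → Matrix (Fin n) (Fin n) ℝ,
      ((∀ t ∈ Icc (0:ℝ) T, ∀ i j : Fin n,
          HasDerivWithinAt (fun s => K s i j)
            ((c₂' • (K t * K t) - c₂ • (Gᵀ * G)) i j) (Icc (0:ℝ) T) t) ∧
        K T = lam • (Gᵀ * G) ∧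
        (∀ t ∈ Icc (0:ℝ) T, (K t).IsSymm ∧ (K t).PosSemidef)) ∧
      (∀ K' : ℝ → Matrix (Fin n) (Fin n) ℝ,
        ((∀ t ∈ Icc (0:ℝ) T, ∀ i j : Fin n,
            HasDerivWithinAt (fun s => K' s i j)
              ((c₂' • (K' t * K' t) - c₂ • (Gᵀ * G)) i j) (Icc (0:ℝ) T) t) ∧
          K' T = lam • (Gᵀ * G) ∧
          (∀ t ∈ Icc (0:ℝ) T, (K' t).IsSymm ∧ (K' t).PosSemidef)) →
        ∀ t ∈ Icc (0:ℝ) T, K' t = K t) := by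
  have hA : (Gᵀ * G).PosDef := by
    simpa [conjTranspose_eq_transpose_of_trivial] using PosDef.conjTranspose_mul_self G hG
  set K := riccatiSolution (Gᵀ * G) c₂ c₂' lam T
  have hK : ∀ t ∈ Icc (0:ℝ) T, ∀ i j : Fin n, HasDerivWithinAt (fun s => K s i j)
      ((c₂' • (K t * K t) - c₂ • (Gᵀ * G)) i j) (Icc (0:ℝ) T) t := fun t ht =>
    hasDerivWithinAt_riccatiSolution_apply hA hc₂ hc₂' hlam ht.2 _
  have hpsd : ∀ t ∈ Icc (0:ℝ) T, (K t).PosSemidef := fun t ht =>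
    posSemidef_riccatiSolution hA.posSemidef c₂ hc₂'.le hlam ht.2
  refine ⟨K, ⟨hK, riccatiSolution_self hA hc₂ hc₂' lam T, fun t ht =>
    ⟨isHermitian_iff_isSymm.mp (hpsd t ht).isHermitian, hpsd t ht⟩⟩, ?_⟩
  rintro K' ⟨hK', hK'T, -⟩ t ht
  exact eqOn_Icc_of_riccati_of_eq_right (Gᵀ * G) c₂ c₂' hK' hK
    (hK'T.trans (riccatiSolution_self hA hc₂ hc₂' lam T).symm) ht

/-- For `c₂, c₂' > 0`, `λ ≥ 0` and `G` an `m × n` full-rank real matrix with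
`n ≤ m` (so `GᵀG` is positive definite), the matrix Riccati terminal value problem
`-K' = -c₂' K² + c₂ GᵀG` on `[0,T]`, `K(T) = λ GᵀG`, has a unique `C¹` solution with
values in the symmetric nonnegative-definite `n × n` matrices. -/
theorem riccati_terminal_value_problem_n_le_m
    {m n : ℕ} (hnm : n ≤ m) (G : Matrix (Fin m) (Fin n) ℝ)
    (hG : Function.Injective G.mulVec)
    (c₂ c₂' lam T : ℝ) (hc₂ : 0 < c₂) (hc₂' : 0 < c₂') (hlam : 0 ≤ lam) (hT : 0 < T) :
    ∃ K : ℝ → Matrix (Fin n) (Fin n) ℝ,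
      ((∀ t ∈ Icc (0:ℝ) T, ∀ i j : Fin n,
          HasDerivWithinAt (fun s => K s i j)
            ((c₂' • (K t * K t) - c₂ • (Gᵀ * G)) i j) (Icc (0:ℝ) T) t) ∧
        K T = lam • (Gᵀ * G) ∧
        (∀ t ∈ Icc (0:ℝ) T, (K t).IsSymm ∧ (K t).PosSemidef)) ∧
      (∀ K' : ℝ → Matrix (Fin n) (Fin n) ℝ,
        ((∀ t ∈ Icc (0:ℝ) T, ∀ i j : Fin n,
            HasDerivWithinAt (fun s => K' s i j)
              ((c₂' • (K' t * K' t) - c₂ • (Gᵀ * G)) i j) (Icc (0:ℝ) T) t) ∧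
          K' T = lam • (Gᵀ * G) ∧
          (∀ t ∈ Icc (0:ℝ) T, (K' t).IsSymm ∧ (K' t).PosSemidef)) →
        ∀ t ∈ Icc (0:ℝ) T, K' t = K t) :=
  riccati_terminal_value_problem_n_le_m_general G hG c₂ c₂' lam T hc₂ hc₂' hlam
end

section
/- Let $c_2, c_2' > 0$, $\lambda \ge 0$, and let $G$ be an $m\times n$ real matrix of full rank with $n > m$ (so $GG^*$ is positive definite). Then the matrix Riccati terminal value problem $-\dot K(t) = c_2 I_m - c_2' K(t) G G^* K(t)$ on $[0,T]$ with $K(T) = \lambda I_m$ has a unique solution $K \in C^1([0,T]; S^m)$ which is symmetric nonnegative definite for every $t\in[0,T]$. -/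
/-
Since `G` is surjective, `GGᵀ` is positive definite, so `GGᵀ = U diag(d) Uᵀ` with `U` orthogonal
and every `dₖ > 0`. Conjugation by `U` is an algebra automorphism, so on matrices of the form
`U diag(φ) Uᵀ` the Riccati equation decouples into the scalar equations
`φₖ' = c₂' dₖ φₖ² - c₂`, `φₖ(T) = λ`. These have explicit hyperbolic solutions which stay
nonnegative for `t ≤ T`, and reassembling them gives a symmetric nonnegative solution.
Uniqueness holds among all solutions: the right-hand side is polynomial, hence Lipschitz on the
bounded set where two solutions live, and Grönwall's inequality applies backwards from `T`.
-/

open Matrix Set Topology Real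

/-- This is `-D' / (α D)` for `D t = a cosh (α a (T - t)) + lam sinh (α a (T - t))`, a solution of
the linear equation `D'' = (α a)² D` obtained by linearising `φ' = α φ² - α a²`. -/
noncomputable def riccatiScalar (α a lam T t : ℝ) : ℝ :=
  a * (lam * cosh (α * a * (T - t)) + a * sinh (α * a * (T - t))) /
    (a * cosh (α * a * (T - t)) + lam * sinh (α * a * (T - t)))

section RiccatiScalar

variable {α a lam T t : ℝ}

lemma mul_cosh_add_mul_sinh_pos_s5 {x : ℝ} (ha : 0 < a) (hlam : 0 ≤ lam) (hx : 0 ≤ x) :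
    0 < a * cosh x + lam * sinh x :=
  add_pos_of_pos_of_nonneg (mul_pos ha (cosh_pos x)) (mul_nonneg hlam (sinh_nonneg_iff.2 hx))

lemma riccatiScalar_self (ha : a ≠ 0) : riccatiScalar α a lam T T = lam := by
  simp only [riccatiScalar, sub_self, mul_zero, cosh_zero, sinh_zero, mul_one, add_zero]
  field_simp

lemma riccatiScalar_nonneg (hα : 0 ≤ α) (ha : 0 < a) (hlam : 0 ≤ lam) (ht : t ≤ T) :
    0 ≤ riccatiScalar α a lam T t := by
  have hx : 0 ≤ α * a * (T - t) := by have := sub_nonneg.2 ht; positivity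
  refine div_nonneg (mul_nonneg ha.le ?_) (mul_cosh_add_mul_sinh_pos_s5 ha hlam hx).le
  exact add_nonneg (mul_nonneg hlam (cosh_pos _).le) (mul_nonneg ha.le (sinh_nonneg_iff.2 hx))

lemma hasDerivAt_riccatiScalar (hα : 0 ≤ α) (ha : 0 < a) (hlam : 0 ≤ lam) (ht : t ≤ T) :
    HasDerivAt (riccatiScalar α a lam T) (α * riccatiScalar α a lam T t ^ 2 - α * a ^ 2) t := by
  have hx : HasDerivAt (fun s => α * a * (T - s)) (-(α * a)) t := by
    simpa using ((hasDerivAt_id t).const_sub T).const_mul (α * a)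
  have hcosh := (hasDerivAt_cosh _).comp t hx
  have hsinh := (hasDerivAt_sinh _).comp t hx
  have hD := (hcosh.const_mul a).add (hsinh.const_mul lam)
  have hM := ((hcosh.const_mul lam).add (hsinh.const_mul a)).const_mul a
  have hDpos := mul_cosh_add_mul_sinh_pos_s5 (x := α * a * (T - t)) ha hlam
    (by have := sub_nonneg.2 ht; positivity)
  refine (hM.div hD hDpos.ne').congr_deriv ?_
  simp only [Pi.add_apply, Function.comp_apply, riccatiScalar]
  generalize cosh (α * a * (T - t)) = C at hDpos ⊢
  generalize sinh (α * a * (T - t)) = S at hDpos ⊢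
  field_simp
  ring

end RiccatiScalar

theorem LinearMap.hasDerivAt_comp {𝕜 E F : Type*} [NontriviallyNormedField 𝕜] [CompleteSpace 𝕜]
    [NormedAddCommGroup E] [NormedSpace 𝕜 E] [FiniteDimensional 𝕜 E]
    [NormedAddCommGroup F] [NormedSpace 𝕜 F] (L : E →ₗ[𝕜] F) {f : 𝕜 → E} {f' : E} {t : 𝕜}
    (h : HasDerivAt f f' t) : HasDerivAt (fun s => L (f s)) (L f') t :=
  (LinearMap.toContinuousLinearMap L).hasFDerivAt.comp_hasDerivAt t h

theorem ODE_solution_unique_of_contDiff_of_mem_Icc_left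
    {E : Type*} [NormedAddCommGroup E] [NormedSpace ℝ E] [FiniteDimensional ℝ E]
    {v : E → E} (hv : ContDiff ℝ 1 v) {f g : ℝ → E} {a b : ℝ}
    (hf : ∀ t ∈ Icc a b, HasDerivWithinAt f (v (f t)) (Icc a b) t)
    (hg : ∀ t ∈ Icc a b, HasDerivWithinAt g (v (g t)) (Icc a b) t)
    (hb : f b = g b) : EqOn f g (Icc a b) := by
  have hfc : ContinuousOn f (Icc a b) := fun t ht => (hf t ht).continuousWithinAt
  have hgc : ContinuousOn g (Icc a b) := fun t ht => (hg t ht).continuousWithinAt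
  obtain ⟨Cf, hCf⟩ := isCompact_Icc.exists_bound_of_continuousOn hfc
  obtain ⟨Cg, hCg⟩ := isCompact_Icc.exists_bound_of_continuousOn hgc
  set R := max Cf Cg
  obtain ⟨L, hL⟩ := hv.contDiffOn.exists_lipschitzOnWith one_ne_zero
    (convex_closedBall 0 R) (isCompact_closedBall 0 R)
  have hleft {h : ℝ → E} (hh : ∀ t ∈ Icc a b, HasDerivWithinAt h (v (h t)) (Icc a b) t) (t : ℝ)
      (ht : t ∈ Ioc a b) : HasDerivWithinAt h (v (h t)) (Iic t) t :=
    (hh t (Ioc_subset_Icc_self ht)).mono_of_mem_nhdsWithin (Icc_mem_nhdsLE_of_mem ht)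
  refine ODE_solution_unique_of_mem_Icc_left (s := fun _ => Metric.closedBall 0 R)
    (fun _ _ => hL) hfc (hleft hf) (fun t ht => ?_) hgc (hleft hg) (fun t ht => ?_) hb
  · exact mem_closedBall_zero_iff.2 ((hCf t (Ioc_subset_Icc_self ht)).trans (le_max_left _ _))
  · exact mem_closedBall_zero_iff.2 ((hCg t (Ioc_subset_Icc_self ht)).trans (le_max_right _ _))

theorem Matrix.vecMul_injective_of_mulVec_surjective {R m n : Type*} [Semiring R]
    [Fintype m] [DecidableEq m] [Fintype n] {A : Matrix m n R}
    (hA : Function.Surjective A.mulVec) : Function.Injective A.vecMul := by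
  obtain ⟨B, hB⟩ := mulVec_surjective_iff_exists_right_inverse.1 hA
  intro x y hxy
  simpa [vecMul_vecMul, hB] using congrArg (· ᵥ* B) hxy

theorem Matrix.posDef_mul_transpose_self_of_surjective {m n : Type*} [Fintype m] [DecidableEq m]
    [Fintype n] {G : Matrix m n ℝ} (hG : Function.Surjective G.mulVec) : (G * Gᵀ).PosDef := by
  simpa using PosDef.mul_conjTranspose_self G (vecMul_injective_of_mulVec_surjective hG)

theorem Matrix.hasDerivAt_iff {m n : Type*} [Fintype n] {K : ℝ → Matrix m n ℝ}
    {K' : Matrix m n ℝ} {t : ℝ} :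
    HasDerivAt K K' t ↔ ∀ i j, HasDerivAt (fun s => K s i j) (K' i j) t :=
  hasDerivAt_pi.trans (forall_congr' fun _ => hasDerivAt_pi)

theorem Matrix.hasDerivWithinAt_iff {m n : Type*} [Fintype n] {K : ℝ → Matrix m n ℝ}
    {K' : Matrix m n ℝ} {S : Set ℝ} {t : ℝ} :
    HasDerivWithinAt K K' S t ↔ ∀ i j, HasDerivWithinAt (fun s => K s i j) (K' i j) S t :=
  hasDerivWithinAt_pi.trans (forall_congr' fun _ => hasDerivWithinAt_pi)

section RiccatiMatrix

variable {m : Type*} [Fintype m] [DecidableEq m]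

attribute [local instance] Matrix.normedAddCommGroup Matrix.normedSpace

def riccatiField (A : Matrix m m ℝ) (c c' : ℝ) (X : Matrix m m ℝ) : Matrix m m ℝ :=
  c' • (X * A * X) - c • 1

lemma riccatiField_diagonal (d f : m → ℝ) (c c' : ℝ) :
    riccatiField (diagonal d) c c' (diagonal f) = diagonal fun k => c' * d k * f k ^ 2 - c := by
  ext i j
  rcases eq_or_ne i j with rfl | hij
  · simp only [riccatiField, diagonal_mul_diagonal, Matrix.sub_apply, Matrix.smul_apply,
      diagonal_apply_eq, smul_eq_mul, one_apply_eq, mul_one]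
    ring
  · simp [riccatiField, hij]

lemma map_riccatiField {F : Type*} [FunLike F (Matrix m m ℝ) (Matrix m m ℝ)]
    [AlgHomClass F ℝ (Matrix m m ℝ) (Matrix m m ℝ)] (φ : F) (A X : Matrix m m ℝ) (c c' : ℝ) :
    φ (riccatiField A c c' X) = riccatiField (φ A) c c' (φ X) := by
  simp [riccatiField, map_sub, map_smul, map_mul, map_one]

theorem contDiff_riccatiField (A : Matrix m m ℝ) (c c' : ℝ) :
    ContDiff ℝ 1 (riccatiField A c c') := by
  refine contDiff_pi.2 fun i => contDiff_pi.2 fun j => ?_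
  simp only [riccatiField, Matrix.sub_apply, Matrix.smul_apply, Matrix.mul_apply, smul_eq_mul]
  fun_prop

theorem riccati_solution_unique {A : Matrix m m ℝ} {c c' a b : ℝ} {K₁ K₂ : ℝ → Matrix m m ℝ}
    (hK₁ : ∀ t ∈ Icc a b, ∀ i j,
      HasDerivWithinAt (fun s => K₁ s i j) (riccatiField A c c' (K₁ t) i j) (Icc a b) t)
    (hK₂ : ∀ t ∈ Icc a b, ∀ i j,
      HasDerivWithinAt (fun s => K₂ s i j) (riccatiField A c c' (K₂ t) i j) (Icc a b) t)
    (hb : K₁ b = K₂ b) : EqOn K₁ K₂ (Icc a b) :=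
  ODE_solution_unique_of_contDiff_of_mem_Icc_left (contDiff_riccatiField A c c')
    (fun t ht => Matrix.hasDerivWithinAt_iff.2 (hK₁ t ht))
    (fun t ht => Matrix.hasDerivWithinAt_iff.2 (hK₂ t ht)) hb

theorem exists_riccati_solution {A : Matrix m m ℝ} (hA : A.PosDef) {c c' : ℝ} (hc : 0 < c)
    (hc' : 0 < c') {lam : ℝ} (hlam : 0 ≤ lam) (T : ℝ) :
    ∃ K : ℝ → Matrix m m ℝ,
      (∀ t ≤ T, ∀ i j, HasDerivAt (fun s => K s i j) (riccatiField A c c' (K t) i j) t) ∧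
        K T = lam • 1 ∧ ∀ t ≤ T, (K t).PosSemidef := by
  set φ := Unitary.conjStarAlgAut ℝ _ hA.1.eigenvectorUnitary
  set d := hA.1.eigenvalues
  have hA_eq : A = φ (diagonal d) := by simpa [φ] using hA.1.spectral_theorem
  have hα (k : m) : 0 < c' * d k := mul_pos hc' (hA.eigenvalues_pos k)
  set a : m → ℝ := fun k => √(c / (c' * d k))
  have ha (k : m) : 0 < a k := sqrt_pos.2 (div_pos hc (hα k))
  have hαa (k : m) : c' * d k * a k ^ 2 = c := by
    rw [sq_sqrt (div_pos hc (hα k)).le, mul_div_cancel₀ _ (hα k).ne']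
  set f : ℝ → m → ℝ := fun t k => riccatiScalar (c' * d k) (a k) lam T t
  have hf (t : ℝ) (ht : t ≤ T) : HasDerivAt f (fun k => c' * d k * f t k ^ 2 - c) t :=
    hasDerivAt_pi.2 fun k => by
      simpa only [hαa] using hasDerivAt_riccatiScalar (hα k).le (ha k) hlam ht
  refine ⟨fun t => φ (diagonal (f t)), fun t ht => Matrix.hasDerivAt_iff.1 ?_, ?_, fun t ht => ?_⟩
  · rw [hA_eq, ← map_riccatiField, riccatiField_diagonal]
    exact (φ.toAlgEquiv.toLinearMap ∘ₗ diagonalLinearMap m ℝ ℝ).hasDerivAt_comp (hf t ht)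
  · have hfT : f T = fun _ => lam := funext fun k => riccatiScalar_self (ha k).ne'
    change φ (diagonal (f T)) = _
    rw [hfT, ← smul_one_eq_diagonal, map_smul, map_one]
  · have hnonneg : ∀ k, 0 ≤ f t k := fun k => riccatiScalar_nonneg (hα k).le (ha k) hlam ht
    simpa [φ, star_eq_conjTranspose] using
      (posSemidef_diagonal_iff.2 hnonneg).mul_mul_conjTranspose_same
        (hA.1.eigenvectorUnitary : Matrix m m ℝ)

end RiccatiMatrix

theorem riccati_terminal_value_problem_n_gt_m_general
    {m n : ℕ} (G : Matrix (Fin m) (Fin n) ℝ)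
    (hG : Function.Surjective G.mulVec)
    (c₂ c₂' lam T : ℝ) (hc₂ : 0 < c₂) (hc₂' : 0 < c₂') (hlam : 0 ≤ lam) :
    ∃ K : ℝ → Matrix (Fin m) (Fin m) ℝ,
      ((∀ t ∈ Icc (0:ℝ) T, ∀ i j : Fin m,
          HasDerivWithinAt (fun s => K s i j)
            ((c₂' • (K t * (G * Gᵀ) * K t) - c₂ • (1 : Matrix (Fin m) (Fin m) ℝ)) i j)
            (Icc (0:ℝ) T) t) ∧
        K T = lam • (1 : Matrix (Fin m) (Fin m) ℝ) ∧
        (∀ t ∈ Icc (0:ℝ) T, (K t).IsSymm ∧ (K t).PosSemidef)) ∧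
      (∀ K' : ℝ → Matrix (Fin m) (Fin m) ℝ,
        ((∀ t ∈ Icc (0:ℝ) T, ∀ i j : Fin m,
            HasDerivWithinAt (fun s => K' s i j)
              ((c₂' • (K' t * (G * Gᵀ) * K' t) - c₂ • (1 : Matrix (Fin m) (Fin m) ℝ)) i j)
              (Icc (0:ℝ) T) t) ∧
          K' T = lam • (1 : Matrix (Fin m) (Fin m) ℝ) ∧
          (∀ t ∈ Icc (0:ℝ) T, (K' t).IsSymm ∧ (K' t).PosSemidef)) →
        ∀ t ∈ Icc (0:ℝ) T, K' t = K t) := by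
  obtain ⟨K, hK_deriv, hKT, hK_psd⟩ :=
    exists_riccati_solution (posDef_mul_transpose_self_of_surjective hG) hc₂ hc₂' hlam T
  have hK_sol : ∀ t ∈ Icc (0:ℝ) T, ∀ i j, HasDerivWithinAt (fun s => K s i j)
      (riccatiField (G * Gᵀ) c₂ c₂' (K t) i j) (Icc (0:ℝ) T) t :=
    fun t ht i j => (hK_deriv t ht.2 i j).hasDerivWithinAt
  refine ⟨K, ⟨hK_sol, hKT, fun t ht => ⟨?_, hK_psd t ht.2⟩⟩, ?_⟩
  · exact isHermitian_iff_isSymm.1 (hK_psd t ht.2).isHermitian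
  · rintro K' ⟨hK'_sol, hK'T, -⟩
    exact riccati_solution_unique hK'_sol hK_sol (hK'T.trans hKT.symm)

/-- For `c₂, c₂' > 0`, `λ ≥ 0` and `G` an `m × n` full-rank real matrix with
`n > m` (so `GGᵀ` is positive definite), the matrix Riccati terminal value problem
`-K' = c₂ Iₘ - c₂' K GGᵀ K` on `[0,T]`, `K(T) = λ Iₘ`, has a unique `C¹` solution with
values in the symmetric nonnegative-definite `m × m` matrices. -/
theorem riccati_terminal_value_problem_n_gt_m
    {m n : ℕ} (hmn : m < n) (G : Matrix (Fin m) (Fin n) ℝ)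
    (hG : Function.Surjective G.mulVec)
    (c₂ c₂' lam T : ℝ) (hc₂ : 0 < c₂) (hc₂' : 0 < c₂') (hlam : 0 ≤ lam) (hT : 0 < T) :
    ∃ K : ℝ → Matrix (Fin m) (Fin m) ℝ,
      ((∀ t ∈ Icc (0:ℝ) T, ∀ i j : Fin m,
          HasDerivWithinAt (fun s => K s i j)
            ((c₂' • (K t * (G * Gᵀ) * K t) - c₂ • (1 : Matrix (Fin m) (Fin m) ℝ)) i j)
            (Icc (0:ℝ) T) t) ∧
        K T = lam • (1 : Matrix (Fin m) (Fin m) ℝ) ∧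
        (∀ t ∈ Icc (0:ℝ) T, (K t).IsSymm ∧ (K t).PosSemidef)) ∧
      (∀ K' : ℝ → Matrix (Fin m) (Fin m) ℝ,
        ((∀ t ∈ Icc (0:ℝ) T, ∀ i j : Fin m,
            HasDerivWithinAt (fun s => K' s i j)
              ((c₂' • (K' t * (G * Gᵀ) * K' t) - c₂ • (1 : Matrix (Fin m) (Fin m) ℝ)) i j)
              (Icc (0:ℝ) T) t) ∧
          K' T = lam • (1 : Matrix (Fin m) (Fin m) ℝ) ∧
          (∀ t ∈ Icc (0:ℝ) T, (K' t).IsSymm ∧ (K' t).PosSemidef)) →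
        ∀ t ∈ Icc (0:ℝ) T, K' t = K t) :=
  riccati_terminal_value_problem_n_gt_m_general G hG c₂ c₂' lam T hc₂ hc₂' hlam
end
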